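/- Let X be a finite-dimensional real normed space, let K, A ⊂ X satisfy condition (H), and let F_A : K → ℝ₊ be defined by F_A(x) := max{t ≥ 0 : x ∈ tA} (with the convention 0·A := K). Then F_A is continuous at every point of (K \ ℙA) ∪ int K, where ℙA := {tx : t > 0, x ∈ A}. In particular, if A ⊂ int K then F_A is continuous on K. -/

import Mathlib

/-!
`F_A` is upper semicontinuous on all of `X`: since `A + K ⊆ A`, the set `{t > 0 : x ∈ t • A}` is
an initial segment, so `F_A ≤ c` off the closed set `c • A`, and `x ∉ c • A` as soon as
`F_A x < c`. Lower semicontinuity is automatic where `F_A` vanishes, in particular off `ℙA`,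
because `F_A ≥ 0`. At `x ∈ int K` with `t⁻¹ • x ∈ A` and `s < t`, we get
`s⁻¹ • x ∈ A + int K ⊆ int A`, and this persists near `x`. Closedness of `A ∌ 0` keeps `F_A`
finite.
-/

open Set Filter Topology Pointwise

variable {X : Type*} [NormedAddCommGroup X] [NormedSpace ℝ X]

/-- The set `t·A`, with the convention `0·A := K`. -/
noncomputable def scaled (K A : Set X) (t : ℝ) : Set X := if t = 0 then K else t • A

/-- `F_A(x) := max {t ≥ 0 : x ∈ tA}` (with the convention `0·A := K`), realized as a
supremum; under condition (H) the set `{t ≥ 0 : x ∈ tA}` is a compact interval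
containing `0`, so the supremum is a maximum. -/
noncomputable def FA (K A : Set X) (x : X) : ℝ :=
  sSup {t : ℝ | 0 ≤ t ∧ x ∈ scaled K A t}

/-- `ℙA = {t • a : t > 0, a ∈ A}`. -/
def posScaled (A : Set X) : Set X := {x | ∃ t : ℝ, 0 < t ∧ ∃ a ∈ A, x = t • a}

lemma exists_pos_le_norm_of_isClosed {E : Type*} [SeminormedAddGroup E] {A : Set E}
    (hA : IsClosed A) (h0 : (0 : E) ∉ A) : ∃ r > 0, ∀ a ∈ A, r ≤ ‖a‖ := by
  obtain ⟨r, hr, hball⟩ := Metric.isOpen_iff.1 hA.isOpen_compl 0 h0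
  refine ⟨r, hr, fun a ha => not_lt.1 fun hlt => hball ?_ ha⟩
  rwa [mem_ball_zero_iff]

lemma add_interior_subset_interior {G : Type*} [TopologicalSpace G] [AddGroup G]
    [IsTopologicalAddGroup G] {A K : Set G} (hAK : A + K ⊆ A) : A + interior K ⊆ interior A :=
  interior_maximal ((add_subset_add_left interior_subset).trans hAK) isOpen_interior.add_left

section Cone

variable {K A : Set X}

lemma smul_mem_of_one_le (hKcone : ∀ t : ℝ, 0 ≤ t → ∀ x ∈ K, t • x ∈ K) (hAK : A + K ⊆ A)
    (hAsub : A ⊆ K) {a : X} (ha : a ∈ A) {r : ℝ} (hr : 1 ≤ r) : r • a ∈ A := by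
  have h : a + (r - 1) • a ∈ A + K := add_mem_add ha (hKcone _ (by linarith) a (hAsub ha))
  rw [sub_smul, one_smul, add_sub_cancel] at h
  exact hAK h

lemma smul_mem_interior_of_cone (hKcone : ∀ t : ℝ, 0 ≤ t → ∀ x ∈ K, t • x ∈ K) {t : ℝ}
    (ht : 0 < t) {x : X} (hx : x ∈ interior K) : t • x ∈ interior K := by
  have hsub : t • K ⊆ K := by
    rintro _ ⟨y, hy, rfl⟩
    exact hKcone t ht.le y hy
  refine interior_mono hsub ?_
  rw [interior_smul₀ ht.ne']
  exact smul_mem_smul_set hx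

lemma posScaled_subset_interior (hKcone : ∀ t : ℝ, 0 ≤ t → ∀ x ∈ K, t • x ∈ K)
    (hA : A ⊆ interior K) : posScaled A ⊆ interior K := by
  rintro _ ⟨t, ht, a, ha, rfl⟩
  exact smul_mem_interior_of_cone hKcone ht (hA ha)

end Cone

section FA

variable {K A : Set X}

lemma mem_scaled_iff {t : ℝ} (ht : t ≠ 0) {x : X} : x ∈ scaled K A t ↔ t⁻¹ • x ∈ A := by
  rw [scaled, if_neg ht]
  exact mem_smul_set_iff_inv_smul_mem₀ ht A x

lemma FA_nonneg (x : X) : 0 ≤ FA K A x :=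
  Real.sSup_nonneg fun _ ht => ht.1

lemma FA_le {x : X} {c : ℝ} (hc : 0 ≤ c) (h : ∀ t, 0 < t → t⁻¹ • x ∈ A → t ≤ c) :
    FA K A x ≤ c := by
  refine Real.sSup_le (fun t ⟨ht, hx⟩ => ?_) hc
  rcases ht.eq_or_lt with rfl | ht
  · exact hc
  · exact h t ht ((mem_scaled_iff ht.ne').1 hx)

lemma exists_lt_of_lt_FA {x : X} {b : ℝ} (hb : 0 ≤ b) (h : b < FA K A x) :
    ∃ t, b < t ∧ t⁻¹ • x ∈ A := by
  by_contra! hcon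
  exact h.not_ge (FA_le hb fun t _ hx => not_lt.1 fun hbt => hcon t hbt hx)

lemma le_FA (hA : IsClosed A) (h0 : (0 : X) ∉ A) {x : X} {t : ℝ} (ht : 0 < t)
    (hx : t⁻¹ • x ∈ A) : t ≤ FA K A x := by
  obtain ⟨r, hr, hnorm⟩ := exists_pos_le_norm_of_isClosed hA h0
  have hbdd : BddAbove {t : ℝ | 0 ≤ t ∧ x ∈ scaled K A t} := by
    refine ⟨‖x‖ / r, fun s ⟨hs, hxs⟩ => ?_⟩
    rcases hs.eq_or_lt with rfl | hs
    · positivity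
    · have := hnorm _ ((mem_scaled_iff hs.ne').1 hxs)
      rw [norm_smul, norm_inv, Real.norm_of_nonneg hs.le, inv_mul_eq_div, le_div_iff₀ hs] at this
      rwa [le_div_iff₀ hr, mul_comm]
  exact le_csSup hbdd ⟨ht.le, (mem_scaled_iff ht.ne').2 hx⟩

lemma FA_eq_zero_of_notMem_posScaled {x : X} (hx : x ∉ posScaled A) : FA K A x = 0 :=
  le_antisymm (FA_le le_rfl fun t ht hxt =>
    absurd ⟨t, ht, _, hxt, (smul_inv_smul₀ ht.ne' x).symm⟩ hx) (FA_nonneg x)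

lemma FA_le_of_notMem_smul (hKcone : ∀ t : ℝ, 0 ≤ t → ∀ x ∈ K, t • x ∈ K) (hAK : A + K ⊆ A)
    (hAsub : A ⊆ K) {x : X} {c : ℝ} (hc : 0 < c) (hx : x ∉ c • A) : FA K A x ≤ c := by
  refine FA_le hc.le fun t ht hxt => not_lt.1 fun hct => hx ?_
  have := smul_mem_of_one_le hKcone hAK hAsub hxt ((one_le_inv_mul₀ hc).2 hct.le)
  rw [smul_smul, mul_assoc, mul_inv_cancel₀ ht.ne', mul_one] at this
  exact (mem_smul_set_iff_inv_smul_mem₀ hc.ne' A x).2 this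

lemma upperSemicontinuous_FA (hKcone : ∀ t : ℝ, 0 ≤ t → ∀ x ∈ K, t • x ∈ K) (hA : IsClosed A)
    (h0 : (0 : X) ∉ A) (hAK : A + K ⊆ A) (hAsub : A ⊆ K) : UpperSemicontinuous (FA K A) := by
  intro x b hb
  obtain ⟨c, hxc, hcb⟩ := exists_between hb
  have hc : 0 < c := (FA_nonneg x).trans_lt hxc
  have hx : x ∉ c • A := fun hx =>
    hxc.not_ge (le_FA hA h0 hc ((mem_smul_set_iff_inv_smul_mem₀ hc.ne' A x).1 hx))
  filter_upwards [(hA.smul_of_ne_zero hc.ne').isOpen_compl.mem_nhds hx] with y hy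
  exact (FA_le_of_notMem_smul hKcone hAK hAsub hc hy).trans_lt hcb

lemma lowerSemicontinuousAt_FA_of_notMem_posScaled {x : X} (hx : x ∉ posScaled A) :
    LowerSemicontinuousAt (FA K A) x := by
  intro b hb
  rw [FA_eq_zero_of_notMem_posScaled hx] at hb
  exact Eventually.of_forall fun y => hb.trans_le (FA_nonneg y)

lemma lowerSemicontinuousAt_FA_of_mem_interior (hKcone : ∀ t : ℝ, 0 ≤ t → ∀ x ∈ K, t • x ∈ K)
    (hA : IsClosed A) (h0 : (0 : X) ∉ A) (hAK : A + K ⊆ A) {x : X} (hx : x ∈ interior K) :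
    LowerSemicontinuousAt (FA K A) x := by
  intro b hb
  rcases lt_or_ge b 0 with hb0 | hb0
  · exact Eventually.of_forall fun y => hb0.trans_le (FA_nonneg y)
  obtain ⟨s, hbs, hsx⟩ := exists_between hb
  have hs : 0 < s := hb0.trans_lt hbs
  obtain ⟨t, hst, hxt⟩ := exists_lt_of_lt_FA hs.le hsx
  have hsx_int : s⁻¹ • x ∈ interior A := by
    have hst' : 0 < s⁻¹ - t⁻¹ := sub_pos.2 (inv_strictAnti₀ hs hst)
    have := add_interior_subset_interior hAK
      (add_mem_add hxt (smul_mem_interior_of_cone hKcone hst' hx))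
    rwa [← add_smul, add_sub_cancel] at this
  have hU : (s⁻¹ • ·) ⁻¹' interior A ∈ 𝓝 x :=
    (isOpen_interior.preimage (continuous_const_smul _)).mem_nhds hsx_int
  filter_upwards [hU] with y hy
  exact hbs.trans_le (le_FA hA h0 hs (interior_subset hy))

end FA

theorem stmt15_general (K A : Set X)
    (hKcone : ∀ t : ℝ, 0 ≤ t → ∀ x ∈ K, t • x ∈ K)
    (hAclosed : IsClosed A)
    (hAK : A + K = A) (hAsub : A ⊆ K \ {0}) :
    (∀ x ∈ (K \ posScaled A) ∪ interior K, ContinuousWithinAt (FA K A) K x) ∧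
    (A ⊆ interior K → ContinuousOn (FA K A) K) := by
  have hAsubK : A ⊆ K := fun a ha => (hAsub ha).1
  have h0 : (0 : X) ∉ A := fun h => (hAsub h).2 rfl
  have hcont : ∀ x ∈ (K \ posScaled A) ∪ interior K, ContinuousAt (FA K A) x := by
    intro x hx
    refine continuousAt_iff_lower_upperSemicontinuousAt.2
      ⟨?_, upperSemicontinuous_FA hKcone hAclosed h0 hAK.subset hAsubK x⟩
    rcases hx with hx | hx
    · exact lowerSemicontinuousAt_FA_of_notMem_posScaled hx.2
    · exact lowerSemicontinuousAt_FA_of_mem_interior hKcone hAclosed h0 hAK.subset hx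
  refine ⟨fun x hx => (hcont x hx).continuousWithinAt, fun hAint x hxK => ?_⟩
  refine (hcont x ?_).continuousWithinAt
  by_cases hxP : x ∈ posScaled A
  · exact Or.inr (posScaled_subset_interior hKcone hAint hxP)
  · exact Or.inl ⟨hxK, hxP⟩

/-- Let `K, A` satisfy condition (H) in a finite-dimensional real normed
space. Then `F_A` is continuous (in the subspace topology of `K`) at every point of
`(K \ ℙA) ∪ int K`; in particular, if `A ⊆ int K` then `F_A` is continuous on `K`. -/
theorem stmt15 [FiniteDimensional ℝ X] [Nontrivial X]
    (hdim : 2 ≤ Module.finrank ℝ X)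
    (K A : Set X)
    (hKconv : Convex ℝ K) (hKclosed : IsClosed K)
    (hKcone : ∀ t : ℝ, 0 ≤ t → ∀ x ∈ K, t • x ∈ K)
    (hKpointed : K ∩ (-K) = {0}) (hKint : (interior K).Nonempty)
    (hAne : A.Nonempty) (hAclosed : IsClosed A)
    (hAK : A + K = A) (hAsub : A ⊆ K \ {0}) :
    (∀ x ∈ (K \ posScaled A) ∪ interior K, ContinuousWithinAt (FA K A) K x) ∧
    (A ⊆ interior K → ContinuousOn (FA K A) K) :=
  stmt15_general K A hKcone hAclosed hAK hAsub
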